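/- For all real numbers θ, γ with |θ| < π and |γ| < π and |tan(γ/2)| ≤ 1, and every real number r, the following inequality holds: |1 − cos θ − r(1 − cos γ)| + |sin θ − r sin γ| ≥ |sin θ| · |tan(θ/2) − tan(γ/2)|. -/

import Mathlib

/-!
By the half-angle identity `1 - cos x = sin x · tan (x/2)` (valid as soon as `cos x ≠ -1`),
writing `T = tan (θ/2)` and `t = tan (γ/2)` one has
`sin θ (T - t) = (1 - cos θ - r (1 - cos γ)) - t (sin θ - r sin γ)`,
and the triangle inequality together with `|t| ≤ 1` gives the bound.
-/

open Real

lemma neg_one_lt_cos_of_abs_lt_pi {x : ℝ} (hx : |x| < π) : -1 < cos x := by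
  obtain ⟨hlo, hhi⟩ := abs_lt.1 hx
  have hpos : 0 < cos (x / 2) := cos_pos_of_mem_Ioo ⟨by linarith, by linarith⟩
  rw [show x = 2 * (x / 2) by ring, cos_two_mul]
  nlinarith

lemma one_sub_cos_eq_sin_mul_tan_half {x : ℝ} (hx : cos x ≠ -1) :
    1 - cos x = sin x * tan (x / 2) := by
  have hden : 1 + tan (x / 2) ^ 2 ≠ 0 := by positivity
  rw [cos_eq_two_mul_tan_half_div_one_sub_tan_half_sq x hx,
    sin_eq_two_mul_tan_half_div_one_add_tan_half_sq x]
  field_simp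
  ring

lemma abs_mul_abs_sub_le_of_abs_le_one {s σ T t : ℝ} (r : ℝ) (ht : |t| ≤ 1) :
    |s| * |T - t| ≤ |s * T - r * (σ * t)| + |s - r * σ| := by
  calc |s| * |T - t|
      = |(s * T - r * (σ * t)) - t * (s - r * σ)| := by rw [← abs_mul]; ring_nf
    _ ≤ |s * T - r * (σ * t)| + |t| * |s - r * σ| := by rw [← abs_mul]; exact abs_sub _ _
    _ ≤ |s * T - r * (σ * t)| + |s - r * σ| := by
        gcongr
        exact mul_le_of_le_one_left (abs_nonneg _) ht

/-- The elementary trigonometric inequality from the proof of Lemma 3.4 of Smith–Sogge,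
"Null form estimates for (1/2,1/2) symbols and local existence for a quasilinear
Dirichlet-wave equation": for `|θ| < π`, `|γ| < π` with `|tan(γ/2)| ≤ 1`, and any `r ∈ ℝ`,
`|1 - cos θ - r(1 - cos γ)| + |sin θ - r sin γ| ≥ |sin θ| ⬝ |tan(θ/2) - tan(γ/2)|`. -/
theorem stmt_16 (θ γ r : ℝ) (hθ : |θ| < π) (hγ : |γ| < π) (hγ2 : |tan (γ / 2)| ≤ 1) :
    |sin θ| * |tan (θ / 2) - tan (γ / 2)| ≤
      |1 - cos θ - r * (1 - cos γ)| + |sin θ - r * sin γ| := by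
  rw [one_sub_cos_eq_sin_mul_tan_half (neg_one_lt_cos_of_abs_lt_pi hθ).ne',
    one_sub_cos_eq_sin_mul_tan_half (neg_one_lt_cos_of_abs_lt_pi hγ).ne']
  exact abs_mul_abs_sub_le_of_abs_le_one r hγ2
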